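/- In the two-independent-multinomial setup, the conditional second moment of the estimated similarity Ŝ = p̂₁ · p̂₂ satisfies: E[Ŝ² | F] = S² + (1/C₂)·p₁ᵀ(diag(p₂) - p₂p₂ᵀ)p₁ + (1/C₁)·p₂ᵀ(diag(p₁) - p₁p₁ᵀ)p₂ + (1/(C₁C₂))·tr{(diag(p₂) - p₂p₂ᵀ)(diag(p₁) - p₁p₁ᵀ)}, where F = (p₁, p₂, C₁, C₂) and S = p₁ · p₂. -/

import Mathlib

/-!
The absorption identity `x_v · M(x) = C · M(x - e_v)` for multinomial coefficients gives the
Stein-type identity `E_C[x_v f(x)] = C p_v E_{C-1}[f(x + e_v)]`, hence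
`E[x_i x_j] = C(C-1) p_i p_j + C δ_ij p_i`, i.e. `E[p̂_i p̂_j] = p_i p_j + Σ_ij / C` with
`Σ = diag p - p pᵀ`. Expanding `Ŝ² = ∑_ij p̂₁ᵢ p̂₂ᵢ p̂₁ⱼ p̂₂ⱼ`, independence factors the expectation
into `∑_ij E[p̂₁ᵢ p̂₁ⱼ] E[p̂₂ᵢ p̂₂ⱼ]`, and multiplying out `(p₁p₁ᵀ + Σ₁/C₁)(p₂p₂ᵀ + Σ₂/C₂)`
entrywise produces the four terms (the trace term uses the symmetry of `Σ₁`).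
-/

open Matrix

/-- Probability mass function of the `Multinomial(C, p)` distribution on count vectors
`x : Fin V → ℕ`. -/
noncomputable def multinomialMass (V C : ℕ) (p : Fin V → ℝ) (x : Fin V → ℕ) : ℝ :=
  if ∑ i, x i = C then (Nat.multinomial Finset.univ x : ℝ) * ∏ i, p i ^ x i else 0

open Finset Nat

theorem Nat.multinomial_add_single_mul {α : Type*} [DecidableEq α] {s : Finset α} {a : α}
    (ha : a ∈ s) (f : α → ℕ) :
    Nat.multinomial s (f + Pi.single a 1) * (f a + 1)
      = (∑ i ∈ s, f i + 1) * Nat.multinomial s f := by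
  have hfact : ∏ i ∈ s, ((f + Pi.single a 1 : α → ℕ) i)! = (f a + 1) * ∏ i ∈ s, (f i)! := by
    rw [← mul_prod_erase s _ ha, ← mul_prod_erase s _ ha, ← mul_assoc]
    congr 1
    · simp [Nat.factorial_succ]
    · exact prod_congr rfl fun i hi => by simp [ne_of_mem_erase hi]
  apply Nat.eq_of_mul_eq_mul_left (prod_factorial_pos s f)
  calc (∏ i ∈ s, (f i)!) * (Nat.multinomial s (f + Pi.single a 1 : α → ℕ) * (f a + 1))
      = (∏ i ∈ s, ((f + Pi.single a 1 : α → ℕ) i)!) * Nat.multinomial s (f + Pi.single a 1) := by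
        rw [hfact]; ring
    _ = (∑ i ∈ s, f i + 1)! := by
        rw [Nat.multinomial_spec]
        simp only [Pi.add_apply, sum_add_distrib, sum_pi_single', if_pos ha]
    _ = (∏ i ∈ s, (f i)!) * ((∑ i ∈ s, f i + 1) * Nat.multinomial s f) := by
        rw [Nat.factorial_succ, ← Nat.multinomial_spec]; ring

theorem prod_pow_add_single {ι M : Type*} [Fintype ι] [DecidableEq ι] [CommMonoid M]
    (p : ι → M) (y : ι → ℕ) (v : ι) :
    ∏ i, p i ^ (y + Pi.single v 1 : ι → ℕ) i = p v * ∏ i, p i ^ y i := by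
  simp only [Pi.add_apply, pow_add, prod_mul_distrib, mul_comm (p v)]
  congr 1
  rw [prod_eq_single v (fun i _ hi => by simp [hi]) (by simp)]
  simp

theorem sum_sum_mul_mul_sq_sum_mul {α β ι : Type*} [Fintype ι] (s : Finset α) (t : Finset β)
    (μ : α → ℝ) (ν : β → ℝ) (f : α → ι → ℝ) (g : β → ι → ℝ) :
    ∑ x ∈ s, ∑ y ∈ t, μ x * ν y * (∑ i, f x i * g y i) ^ 2
      = ∑ i, ∑ j, (∑ x ∈ s, μ x * (f x i * f x j)) * (∑ y ∈ t, ν y * (g y i * g y j)) := by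
  set F := fun x y i j => μ x * (f x i * f x j) * (ν y * (g y i * g y j))
  have hterm : ∀ x y, μ x * ν y * (∑ i, f x i * g y i) ^ 2 = ∑ i, ∑ j, F x y i j := fun x y => by
    rw [sq, sum_mul_sum, mul_sum]
    exact sum_congr rfl fun i _ => by rw [mul_sum]; exact sum_congr rfl fun j _ => by ring
  calc ∑ x ∈ s, ∑ y ∈ t, μ x * ν y * (∑ i, f x i * g y i) ^ 2
      = ∑ x ∈ s, ∑ i, ∑ j, ∑ y ∈ t, F x y i j := sum_congr rfl fun x _ => by
        simp_rw [hterm]; rw [sum_comm]; exact sum_congr rfl fun i _ => sum_comm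
    _ = ∑ i, ∑ j, ∑ x ∈ s, ∑ y ∈ t, F x y i j := by
        rw [sum_comm]; exact sum_congr rfl fun i _ => sum_comm
    _ = _ := by simp_rw [sum_mul_sum, F]

theorem sum_sum_outer_add_mul_outer_add {ι : Type*} [Fintype ι] (p q : ι → ℝ)
    {A : Matrix ι ι ℝ} (hA : A.IsSymm) (B : Matrix ι ι ℝ) (a b : ℝ) :
    ∑ i, ∑ j, (p i * p j + a * A i j) * (q i * q j + b * B i j)
      = (∑ i, p i * q i) ^ 2 + b * (p ⬝ᵥ (B *ᵥ p)) + a * (q ⬝ᵥ (A *ᵥ q))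
        + a * b * trace (B * A) := by
  rw [sq, sum_mul_sum]
  simp only [dotProduct, mulVec, trace, Matrix.diag, mul_apply, mul_sum, ← sum_add_distrib]
  refine sum_congr rfl fun i _ => sum_congr rfl fun j _ => ?_
  rw [hA.apply]
  ring

section

variable {V : ℕ}

theorem multinomialMass_of_sum_eq {C : ℕ} (p : Fin V → ℝ) {x : Fin V → ℕ} (hx : ∑ i, x i = C) :
    multinomialMass V C p x = Nat.multinomial univ x * ∏ i, p i ^ x i := if_pos hx

theorem multinomialMass_eq_zero_of_notMem {C : ℕ} (p : Fin V → ℝ) {x : Fin V → ℕ}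
    (hx : x ∉ piAntidiag univ C) : multinomialMass V C p x = 0 :=
  if_neg fun h => hx (by simpa using h)

theorem tsum_tsum_multinomialMass_mul (C₁ C₂ : ℕ) (p₁ p₂ : Fin V → ℝ)
    (g : (Fin V → ℕ) → (Fin V → ℕ) → ℝ) :
    ∑' x₁, ∑' x₂, multinomialMass V C₁ p₁ x₁ * multinomialMass V C₂ p₂ x₂ * g x₁ x₂
      = ∑ x₁ ∈ piAntidiag univ C₁, ∑ x₂ ∈ piAntidiag univ C₂,
          multinomialMass V C₁ p₁ x₁ * multinomialMass V C₂ p₂ x₂ * g x₁ x₂ := by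
  have hinner (x₁ : Fin V → ℕ) :
      ∑' x₂, multinomialMass V C₁ p₁ x₁ * multinomialMass V C₂ p₂ x₂ * g x₁ x₂
        = ∑ x₂ ∈ piAntidiag univ C₂,
            multinomialMass V C₁ p₁ x₁ * multinomialMass V C₂ p₂ x₂ * g x₁ x₂ :=
    tsum_eq_sum fun x₂ hx₂ => by simp [multinomialMass_eq_zero_of_notMem p₂ hx₂]
  rw [tsum_congr hinner]
  exact tsum_eq_sum fun x₁ hx₁ => by simp [multinomialMass_eq_zero_of_notMem p₁ hx₁]

theorem sum_multinomialMass {p : Fin V → ℝ} (hp : ∑ i, p i = 1) (C : ℕ) :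
    ∑ x ∈ piAntidiag univ C, multinomialMass V C p x = 1 := by
  rw [← one_pow C, ← hp, sum_pow_eq_sum_piAntidiag]
  exact sum_congr rfl fun x hx => multinomialMass_of_sum_eq p (mem_piAntidiag.1 hx).1

theorem multinomialMass_succ_add_single_mul {C : ℕ} (p : Fin V → ℝ) {y : Fin V → ℕ}
    (hy : ∑ i, y i = C) (v : Fin V) :
    multinomialMass V (C + 1) p (y + Pi.single v 1) * ((y v : ℝ) + 1)
      = (C + 1) * p v * multinomialMass V C p y := by
  have hsum : ∑ i, (y + Pi.single v 1 : Fin V → ℕ) i = C + 1 := by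
    simp [sum_add_distrib, hy]
  have hcoef : (Nat.multinomial univ (y + Pi.single v 1 : Fin V → ℕ) : ℝ) * ((y v : ℝ) + 1)
      = (C + 1) * Nat.multinomial univ y := by
    exact_mod_cast hy ▸ Nat.multinomial_add_single_mul (mem_univ v) y
  rw [multinomialMass_of_sum_eq p hsum, multinomialMass_of_sum_eq p hy, prod_pow_add_single]
  linear_combination (p v * ∏ i, p i ^ y i) * hcoef

theorem sum_multinomialMass_succ_mul_coord_mul (C : ℕ) (p : Fin V → ℝ) (v : Fin V)
    (f : (Fin V → ℕ) → ℝ) :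
    ∑ x ∈ piAntidiag univ (C + 1), multinomialMass V (C + 1) p x * (x v * f x)
      = (C + 1) * p v *
          ∑ y ∈ piAntidiag univ C, multinomialMass V C p y * f (y + Pi.single v 1) := by
  set e : Fin V → ℕ := Pi.single v 1
  have hshift : (piAntidiag univ C).map (addRightEmbedding e) ⊆ piAntidiag univ (C + 1) := by
    simp only [subset_iff, mem_map, mem_piAntidiag, addRightEmbedding_apply]
    rintro _ ⟨y, ⟨hy, -⟩, rfl⟩
    simp [e, sum_add_distrib, hy]
  have hvanish : ∀ x ∈ piAntidiag univ (C + 1), x ∉ (piAntidiag univ C).map (addRightEmbedding e) →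
      multinomialMass V (C + 1) p x * (x v * f x) = 0 := by
    intro x hx hxy
    suffices x v = 0 by simp [this]
    by_contra hxv
    have hcancel : x - e + e = x := funext fun i => by
      by_cases hi : i = v
      · subst hi; simp only [Pi.add_apply, Pi.sub_apply, Pi.single_eq_same, e]; omega
      · simp [e, hi]
    refine hxy (mem_map.2 ⟨x - e, ?_, hcancel⟩)
    have hsum := congrArg (fun z => ∑ i, z i) hcancel
    simp only [Pi.add_apply, sum_add_distrib, e, sum_pi_single', mem_univ, if_true,
      (mem_piAntidiag.1 hx).1] at hsum
    simpa using hsum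
  rw [← sum_subset hshift hvanish, sum_map, mul_sum]
  refine sum_congr rfl fun y hy => ?_
  rw [addRightEmbedding_apply, ← mul_assoc, ← mul_assoc,
    ← multinomialMass_succ_add_single_mul p (mem_piAntidiag.1 hy).1 v]
  simp [e]

theorem sum_multinomialMass_mul_coord {p : Fin V → ℝ} (hp : ∑ i, p i = 1) (C : ℕ) (i : Fin V) :
    ∑ x ∈ piAntidiag univ C, multinomialMass V C p x * x i = C * p i := by
  cases C with
  | zero => simp
  | succ C =>
    simpa [sum_multinomialMass hp] using sum_multinomialMass_succ_mul_coord_mul C p i fun _ => 1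

theorem sum_multinomialMass_mul_coord_mul_coord {p : Fin V → ℝ} (hp : ∑ i, p i = 1) (C : ℕ)
    (i j : Fin V) :
    ∑ x ∈ piAntidiag univ C, multinomialMass V C p x * (x i * x j)
      = C * (C - 1) * (p i * p j) + C * diagonal p i j := by
  cases C with
  | zero => simp
  | succ C =>
    rw [sum_multinomialMass_succ_mul_coord_mul C p i fun x => (x j : ℝ)]
    simp only [Pi.add_apply, Pi.single_apply, Nat.cast_add, mul_add, sum_add_distrib,
      sum_multinomialMass_mul_coord hp, ← sum_mul, sum_multinomialMass hp, diagonal_apply]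
    by_cases hij : i = j
    · subst hij; simp only [↓reduceIte, Nat.cast_one]; ring
    · simp only [hij, Ne.symm hij, ↓reduceIte, Nat.cast_zero]; ring

theorem sum_multinomialMass_mul_proportion_mul_proportion {p : Fin V → ℝ} (hp : ∑ i, p i = 1)
    {C : ℕ} (hC : C ≠ 0) (i j : Fin V) :
    ∑ x ∈ piAntidiag univ C, multinomialMass V C p x * ((x i / C) * (x j / C))
      = p i * p j + 1 / C * (diagonal p - vecMulVec p p) i j := by
  have hC' : (C : ℝ) ≠ 0 := Nat.cast_ne_zero.2 hC
  calc ∑ x ∈ piAntidiag univ C, multinomialMass V C p x * ((x i / C) * (x j / C))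
      = (∑ x ∈ piAntidiag univ C, multinomialMass V C p x * (x i * x j)) / C ^ 2 := by
        rw [sum_div]
        exact sum_congr rfl fun x _ => by ring
    _ = _ := by
        rw [sum_multinomialMass_mul_coord_mul_coord hp, Matrix.sub_apply, vecMulVec_apply]
        field_simp
        ring

end

theorem multinomial_similarity_second_moment_general (V C₁ C₂ : ℕ) (hC₁ : 1 ≤ C₁) (hC₂ : 1 ≤ C₂)
    (p₁ p₂ : Fin V → ℝ)
    (hp₁1 : ∑ i, p₁ i = 1) (hp₂1 : ∑ i, p₂ i = 1) :
    (∑' x₁ : Fin V → ℕ, ∑' x₂ : Fin V → ℕ,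
        multinomialMass V C₁ p₁ x₁ * multinomialMass V C₂ p₂ x₂ *
          (∑ i, ((x₁ i : ℝ) / C₁) * ((x₂ i : ℝ) / C₂)) ^ 2)
      = (∑ i, p₁ i * p₂ i) ^ 2
        + (1 / (C₂ : ℝ)) * (p₁ ⬝ᵥ ((Matrix.diagonal p₂ - vecMulVec p₂ p₂) *ᵥ p₁))
        + (1 / (C₁ : ℝ)) * (p₂ ⬝ᵥ ((Matrix.diagonal p₁ - vecMulVec p₁ p₁) *ᵥ p₂))
        + (1 / ((C₁ : ℝ) * C₂)) *
            Matrix.trace ((Matrix.diagonal p₂ - vecMulVec p₂ p₂) *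
              (Matrix.diagonal p₁ - vecMulVec p₁ p₁)) := by
  have hcov : (diagonal p₁ - vecMulVec p₁ p₁).IsSymm :=
    (isSymm_diagonal p₁).sub (by simp [IsSymm, transpose_vecMulVec])
  rw [tsum_tsum_multinomialMass_mul, sum_sum_mul_mul_sq_sum_mul]
  simp_rw [sum_multinomialMass_mul_proportion_mul_proportion hp₁1 (by omega : C₁ ≠ 0),
    sum_multinomialMass_mul_proportion_mul_proportion hp₂1 (by omega : C₂ ≠ 0)]
  rw [sum_sum_outer_add_mul_outer_add p₁ p₂ hcov, one_div_mul_one_div]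

/-- for `x₁ ~ Multinomial(C₁, p₁)` and `x₂ ~ Multinomial(C₂, p₂)`
conditionally independent given `F = (p₁, p₂, C₁, C₂)`, with `p̂_t = x_t/C_t` and
`Ŝ = p̂₁ · p̂₂`, `S = p₁ · p₂`:
`E[Ŝ² | F] = S² + (1/C₂)·p₁ᵀ(diag(p₂) - p₂p₂ᵀ)p₁ + (1/C₁)·p₂ᵀ(diag(p₁) - p₁p₁ᵀ)p₂
  + (1/(C₁C₂))·tr{(diag(p₂) - p₂p₂ᵀ)(diag(p₁) - p₁p₁ᵀ)}`. -/
theorem multinomial_similarity_second_moment (V C₁ C₂ : ℕ) (hC₁ : 1 ≤ C₁) (hC₂ : 1 ≤ C₂)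
    (p₁ p₂ : Fin V → ℝ)
    (hp₁0 : ∀ i, 0 ≤ p₁ i) (hp₁1 : ∑ i, p₁ i = 1)
    (hp₂0 : ∀ i, 0 ≤ p₂ i) (hp₂1 : ∑ i, p₂ i = 1) :
    (∑' x₁ : Fin V → ℕ, ∑' x₂ : Fin V → ℕ,
        multinomialMass V C₁ p₁ x₁ * multinomialMass V C₂ p₂ x₂ *
          (∑ i, ((x₁ i : ℝ) / C₁) * ((x₂ i : ℝ) / C₂)) ^ 2)
      = (∑ i, p₁ i * p₂ i) ^ 2
        + (1 / (C₂ : ℝ)) * (p₁ ⬝ᵥ ((Matrix.diagonal p₂ - vecMulVec p₂ p₂) *ᵥ p₁))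
        + (1 / (C₁ : ℝ)) * (p₂ ⬝ᵥ ((Matrix.diagonal p₁ - vecMulVec p₁ p₁) *ᵥ p₂))
        + (1 / ((C₁ : ℝ) * C₂)) *
            Matrix.trace ((Matrix.diagonal p₂ - vecMulVec p₂ p₂) *
              (Matrix.diagonal p₁ - vecMulVec p₁ p₁)) :=
  multinomial_similarity_second_moment_general V C₁ C₂ hC₁ hC₂ p₁ p₂ hp₁1 hp₂1
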